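/- Let Q be a quasi-abelian category with enough projectives and let 𝒫 be a sufficiently large class of projective objects. Let 0 → Q1 → Q2 → Q3 → 0 be a strictly exact sequence (Q1 → Q2 is a kernel of Q2 → Q3 and Q2 → Q3 is a strict epimorphism), and let f : Q → Q3 be any morphism. Then there exist an object P ∈ 𝒫, a strictly exact sequence 0 → K → P → Q → 0, a strict epimorphism e : K → Q1 and a morphism g : P → Q2 such that the diagram with rows 0 → K → P → Q → 0 and 0 → Q1 → Q2 → Q3 → 0 and vertical maps e, g, f commutes. -/
import Mathlib

open CategoryTheory CategoryTheory.Limits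

universe v u

/-- A morphism is a strict epimorphism if it is a cokernel of some morphism. -/
def IsStrictEpi {C : Type u} [Category.{v} C] [HasZeroMorphisms C]
    {X Y : C} (f : X ⟶ Y) : Prop :=
  ∃ (Z : C) (g : Z ⟶ X) (w : g ≫ f = 0), Nonempty (IsColimit (CokernelCofork.ofπ f w))

/-- A morphism is a strict monomorphism if it is a kernel of some morphism. -/
def IsStrictMono {C : Type u} [Category.{v} C] [HasZeroMorphisms C]
    {X Y : C} (f : X ⟶ Y) : Prop :=
  ∃ (Z : C) (g : Y ⟶ Z) (w : f ≫ g = 0), Nonempty (IsLimit (KernelFork.ofι f w))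

/-- A quasi-abelian category: an additive category (preadditive with all finite limits
and colimits) in which strict epimorphisms are stable under pullback and strict
monomorphisms are stable under pushout. -/
class QuasiAbelian (C : Type u) [Category.{v} C] [Preadditive C]
    [HasFiniteLimits C] [HasFiniteColimits C] : Prop where
  pullback_strictEpi : ∀ {X Y Z : C} (f : X ⟶ Z) (g : Y ⟶ Z),
    IsStrictEpi f → IsStrictEpi (pullback.snd f g)
  pushout_strictMono : ∀ {X Y Z : C} (f : X ⟶ Y) (g : X ⟶ Z),
    IsStrictMono f → IsStrictMono (pushout.inr f g)

/-- An object `P` is projective (in the strict sense) if every morphism from `P` lifts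
along every strict epimorphism, i.e. `Hom(P, −)` sends strict epimorphisms to
surjections. -/
def IsStrictProjective {C : Type u} [Category.{v} C] [HasZeroMorphisms C] (P : C) : Prop :=
  ∀ ⦃X Y : C⦄ (f : X ⟶ Y), IsStrictEpi f → ∀ g : P ⟶ Y, ∃ h : P ⟶ X, h ≫ f = g

/-- A category has enough (strict) projectives if every object is the target of a strict
epimorphism from a projective object. -/
def HasEnoughStrictProjectives (C : Type u) [Category.{v} C] [HasZeroMorphisms C] : Prop :=
  ∀ X : C, ∃ (P : C) (p : P ⟶ X), IsStrictProjective P ∧ IsStrictEpi p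

attribute [local instance] CategoryTheory.Limits.HasFiniteBiproducts.of_hasFiniteProducts
attribute [local instance] CategoryTheory.Limits.hasBinaryBiproducts_of_finite_biproducts

/-- A class `Ps` of objects is a sufficiently large class of projectives: every member is
projective, `Ps` is closed under finite direct sums, and every projective object is a
retract of a member of `Ps`. -/
structure IsSufficientlyLarge {C : Type u} [Category.{v} C] [Preadditive C]
    [HasFiniteLimits C] [HasFiniteColimits C] (Ps : Set C) : Prop where
  projective : ∀ P ∈ Ps, IsStrictProjective P
  biprod_mem : ∀ P Q : C, P ∈ Ps → Q ∈ Ps → (P ⊞ Q) ∈ Ps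
  retract : ∀ X : C, IsStrictProjective X →
    ∃ P ∈ Ps, ∃ (i : X ⟶ P) (r : P ⟶ X), i ≫ r = 𝟙 X

section Helpers

set_option linter.unusedSectionVars false

variable {C : Type u} [Category.{v} C] [Preadditive C]
    [HasFiniteLimits C] [HasFiniteColimits C]

theorem IsStrictEpi.epi {X Y : C} {f : X ⟶ Y} (hf : IsStrictEpi f) : Epi f := by
  obtain ⟨Z, g, w, ⟨hc⟩⟩ := hf
  constructor
  intro T a b hab
  apply Cofork.IsColimit.hom_ext hc
  simpa using hab

/-- A split epimorphism is a strict epimorphism. -/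
theorem isStrictEpi_of_splitting {X Y : C} (r : X ⟶ Y) (i : Y ⟶ X) (hi : i ≫ r = 𝟙 Y) :
    IsStrictEpi r := by
  have hw : (𝟙 X - r ≫ i) ≫ r = 0 := by
    simp [Preadditive.sub_comp, Category.assoc, hi]
  refine ⟨X, 𝟙 X - r ≫ i, hw, ⟨CokernelCofork.IsColimit.ofπ _ _
    (fun {T} φ _ => i ≫ φ) ?_ ?_⟩⟩
  · intro T φ hφ
    have h1 : φ - r ≫ (i ≫ φ) = 0 := by
      simpa [Preadditive.sub_comp, Category.assoc] using hφ
    have := sub_eq_zero.mp h1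
    rw [← Category.assoc] at this ⊢
    exact this.symm
  · intro T φ hφ m hm
    have : i ≫ φ = m := by rw [← hm, ← Category.assoc, hi, Category.id_comp]
    exact this.symm

theorem isStrictEpi_id (X : C) : IsStrictEpi (𝟙 X) :=
  isStrictEpi_of_splitting (𝟙 X) (𝟙 X) (by simp)

/-- A strict epimorphism is the cokernel of its kernel. -/
theorem IsStrictEpi.isColimit_cofork {X Y : C} {f : X ⟶ Y} (hf : IsStrictEpi f) :
    Nonempty (IsColimit (CokernelCofork.ofπ f (kernel.condition f))) := by
  obtain ⟨Z, g, w, ⟨hc⟩⟩ := hf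
  haveI : Epi f := IsStrictEpi.epi ⟨Z, g, w, ⟨hc⟩⟩
  refine ⟨CokernelCofork.IsColimit.ofπ' f (kernel.condition f) (fun {A} φ hφ => ?_)⟩
  have hg : g ≫ φ = 0 := by
    rw [← kernel.lift_ι f g w, Category.assoc, hφ, comp_zero]
  obtain ⟨ψ, hψ⟩ := CokernelCofork.IsColimit.desc' hc φ hg
  exact ⟨ψ, by simpa using hψ⟩

/-- Composition of strict epimorphisms is a strict epimorphism (quasi-abelian). -/
theorem IsStrictEpi.comp [QuasiAbelian C] {X Y Z : C} {f : X ⟶ Y} {g : Y ⟶ Z}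
    (hf : IsStrictEpi f) (hg : IsStrictEpi g) : IsStrictEpi (f ≫ g) := by
  haveI hfe : Epi f := hf.epi
  haveI hge : Epi g := hg.epi
  haveI : Epi (f ≫ g) := epi_comp f g
  obtain ⟨hfc⟩ := hf.isColimit_cofork
  obtain ⟨hgc⟩ := hg.isColimit_cofork
  have hsnd : IsStrictEpi (pullback.snd f (kernel.ι g)) :=
    QuasiAbelian.pullback_strictEpi f (kernel.ι g) hf
  haveI : Epi (pullback.snd f (kernel.ι g)) := hsnd.epi
  have hw : pullback.fst f (kernel.ι g) ≫ (f ≫ g) = 0 := by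
    rw [← Category.assoc, pullback.condition, Category.assoc, kernel.condition, comp_zero]
  refine ⟨_, pullback.fst f (kernel.ι g), hw,
    ⟨CokernelCofork.IsColimit.ofπ' _ hw (fun {A} φ hφ => ?_)⟩⟩
  -- Step 1 : kernel.ι f ≫ φ = 0
  have h1 : kernel.ι f ≫ φ = 0 := by
    have hl : pullback.lift (kernel.ι f) 0 (by simp) ≫ pullback.fst f (kernel.ι g) =
        kernel.ι f := pullback.lift_fst _ _ _
    rw [← hl, Category.assoc, hφ, comp_zero]
  -- Step 2 : factor φ through f
  obtain ⟨φ', hφ'⟩ := CokernelCofork.IsColimit.desc' hfc φ h1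
  simp only [Cofork.π_ofπ] at hφ'
  -- Step 3 : kernel.ι g ≫ φ' = 0
  have h3 : kernel.ι g ≫ φ' = 0 := by
    rw [← cancel_epi (pullback.snd f (kernel.ι g)), ← Category.assoc, ← pullback.condition,
      Category.assoc, hφ', hφ, comp_zero]
  -- Step 4 : factor φ' through g
  obtain ⟨ψ, hψ⟩ := CokernelCofork.IsColimit.desc' hgc φ' h3
  simp only [Cofork.π_ofπ] at hψ
  exact ⟨ψ, by rw [Category.assoc, hψ, hφ']⟩

theorem isStrictEpi_biprod_map {X₁ X₂ Y₁ Y₂ : C} {f : X₁ ⟶ Y₁} {g : X₂ ⟶ Y₂}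
    (hf : IsStrictEpi f) (hg : IsStrictEpi g) : IsStrictEpi (biprod.map f g) := by
  obtain ⟨Z₁, h₁, w₁, ⟨hc₁⟩⟩ := hf
  obtain ⟨Z₂, h₂, w₂, ⟨hc₂⟩⟩ := hg
  haveI hfe : Epi f := IsStrictEpi.epi ⟨Z₁, h₁, w₁, ⟨hc₁⟩⟩
  haveI hge : Epi g := IsStrictEpi.epi ⟨Z₂, h₂, w₂, ⟨hc₂⟩⟩
  haveI : Epi (biprod.map f g) := by
    constructor
    intro T a b hab
    apply biprod.hom_ext'
    · have h := biprod.inl ≫= hab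
      simp only [biprod.inl_map_assoc] at h
      exact (cancel_epi f).1 h
    · have h := biprod.inr ≫= hab
      simp only [biprod.inr_map_assoc] at h
      exact (cancel_epi g).1 h
  have hw : biprod.map h₁ h₂ ≫ biprod.map f g = 0 := by
    apply biprod.hom_ext' <;>
      simp [reassoc_of% w₁, reassoc_of% w₂, w₁, w₂]
  refine ⟨_, biprod.map h₁ h₂, hw, ⟨CokernelCofork.IsColimit.ofπ' _ hw (fun {A} φ hφ => ?_)⟩⟩
  have e₁ : h₁ ≫ biprod.inl ≫ φ = 0 := by
    rw [← biprod.inl_map_assoc, hφ, comp_zero]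
  have e₂ : h₂ ≫ biprod.inr ≫ φ = 0 := by
    rw [← biprod.inr_map_assoc, hφ, comp_zero]
  obtain ⟨ψ₁, hψ₁⟩ := CokernelCofork.IsColimit.desc' hc₁ _ e₁
  obtain ⟨ψ₂, hψ₂⟩ := CokernelCofork.IsColimit.desc' hc₂ _ e₂
  simp only [Cofork.π_ofπ] at hψ₁ hψ₂
  refine ⟨biprod.desc ψ₁ ψ₂, ?_⟩
  apply biprod.hom_ext' <;> simp [hψ₁, hψ₂]

/-- `biprod.desc t s` with `s` a strict epimorphism is a strict epimorphism. -/
theorem isStrictEpi_biprod_desc_right [QuasiAbelian C] {X Y W : C} (t : X ⟶ W) {s : Y ⟶ W}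
    (hs : IsStrictEpi s) : IsStrictEpi (biprod.desc t s) := by
  have hfac : biprod.desc t s = biprod.map (𝟙 X) s ≫ biprod.desc t (𝟙 W) := by
    apply biprod.hom_ext' <;> simp
  rw [hfac]
  exact IsStrictEpi.comp (isStrictEpi_biprod_map (isStrictEpi_id X) hs)
    (isStrictEpi_of_splitting _ biprod.inr (by simp))

/-- `biprod.desc s t` with `s` a strict epimorphism is a strict epimorphism. -/
theorem isStrictEpi_biprod_desc_left [QuasiAbelian C] {X Y W : C} {s : X ⟶ W} (t : Y ⟶ W)
    (hs : IsStrictEpi s) : IsStrictEpi (biprod.desc s t) := by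
  have hfac : biprod.desc s t = biprod.map s (𝟙 Y) ≫ biprod.desc (𝟙 W) t := by
    apply biprod.hom_ext' <;> simp
  rw [hfac]
  exact IsStrictEpi.comp (isStrictEpi_biprod_map hs (isStrictEpi_id Y))
    (isStrictEpi_of_splitting _ biprod.inl (by simp))

end Helpers

/-- (Filling a short exact sequence.)  Let `Q` be a quasi-abelian category with enough
projectives and `Ps` a sufficiently large class of projectives.  Given a strictly exact
sequence `0 → Q1 →(m) Q2 →(e) Q3 → 0` (`m` is a kernel of `e`, `e` is a strict
epimorphism) and any morphism `f : Q ⟶ Q3`, there are an object `P ∈ Ps`, a strictly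
exact sequence `0 → K →(k) P →(p) Q → 0`, a strict epimorphism `eK : K ⟶ Q1` and a
morphism `g : P ⟶ Q2` making the evident diagram commute. -/
theorem filling_short_exact
    {C : Type u} [Category.{v} C] [Preadditive C]
    [HasFiniteLimits C] [HasFiniteColimits C] [QuasiAbelian C]
    (henough : HasEnoughStrictProjectives C)
    (Ps : Set C) (hPs : IsSufficientlyLarge Ps)
    {Q1 Q2 Q3 Q : C} (m : Q1 ⟶ Q2) (e : Q2 ⟶ Q3) (w : m ≫ e = 0)
    (hker : Nonempty (IsLimit (KernelFork.ofι m w)))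
    (hepi : IsStrictEpi e) (f : Q ⟶ Q3) :
    ∃ (P : C) (_ : P ∈ Ps) (K : C) (k : K ⟶ P) (p : P ⟶ Q) (wk : k ≫ p = 0),
      Nonempty (IsLimit (KernelFork.ofι k wk)) ∧ IsStrictEpi p ∧
      ∃ (eK : K ⟶ Q1) (g : P ⟶ Q2),
        IsStrictEpi eK ∧ k ≫ g = eK ≫ m ∧ g ≫ e = p ≫ f := by
  obtain ⟨hkerlim⟩ := hker
  -- a projective cover of Q by a member of Ps
  obtain ⟨P0, p0, hP0proj, hp0⟩ := henough Q
  obtain ⟨PQ, hPQ, i0, r0, hir0⟩ := hPs.retract P0 hP0proj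
  set π : PQ ⟶ Q := r0 ≫ p0 with hπdef
  have hπ : IsStrictEpi π := IsStrictEpi.comp (isStrictEpi_of_splitting r0 i0 hir0) hp0
  -- a projective cover of Q1 by a member of Ps
  obtain ⟨P1', p1, hP1proj, hp1⟩ := henough Q1
  obtain ⟨P1, hP1, i1, r1, hir1⟩ := hPs.retract P1' hP1proj
  set ρ : P1 ⟶ Q1 := r1 ≫ p1 with hρdef
  have hρ : IsStrictEpi ρ := IsStrictEpi.comp (isStrictEpi_of_splitting r1 i1 hir1) hp1
  -- lift π ≫ f through e using projectivity of PQ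
  obtain ⟨g0, hg0⟩ := hPs.projective PQ hPQ e hepi (π ≫ f)
  -- factor kernel.ι π ≫ g0 through m
  have hvw : (kernel.ι π ≫ g0) ≫ e = 0 := by
    rw [Category.assoc, hg0, ← Category.assoc, kernel.condition, zero_comp]
  obtain ⟨v, hv⟩ := KernelFork.IsLimit.lift' hkerlim (kernel.ι π ≫ g0) hvw
  simp only [Fork.ι_ofι] at hv
  -- set up the data
  refine ⟨PQ ⊞ P1, hPs.biprod_mem PQ P1 hPQ hP1, kernel π ⊞ P1,
    biprod.map (kernel.ι π) (𝟙 P1), biprod.desc π 0, ?_, ⟨?_⟩, ?_, biprod.desc v ρ,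
    biprod.desc g0 (ρ ≫ m), ?_, ?_, ?_⟩
  · apply biprod.hom_ext' <;> simp
  · -- the kernel fork is limiting
    haveI : Mono (biprod.map (kernel.ι π) (𝟙 P1)) := by
      constructor
      intro T a b hab
      apply biprod.hom_ext
      · have h := hab =≫ biprod.fst
        simp only [Category.assoc, biprod.map_fst] at h
        rw [← Category.assoc, ← Category.assoc] at h
        exact (cancel_mono (kernel.ι π)).1 h
      · have h := hab =≫ biprod.snd
        simpa using h
    refine KernelFork.IsLimit.ofι' _ _ (fun {T} t ht => ?_)
    have htf : (t ≫ biprod.fst) ≫ π = 0 := by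
      have : t ≫ biprod.desc π 0 = t ≫ biprod.fst ≫ π := by
        congr 1
        apply biprod.hom_ext' <;> simp
      rw [Category.assoc]
      rw [this] at ht
      rw [← Category.assoc] at ht ⊢
      exact ht
    refine ⟨biprod.lift (kernel.lift π (t ≫ biprod.fst) htf) (t ≫ biprod.snd), ?_⟩
    apply biprod.hom_ext <;> simp
  · -- p is a strict epi
    exact isStrictEpi_biprod_desc_left 0 hπ
  · -- eK is a strict epi
    exact isStrictEpi_biprod_desc_right v hρ
  · -- k ≫ g = eK ≫ m
    apply biprod.hom_ext' <;> simp [hv]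
  · -- g ≫ e = p ≫ f
    apply biprod.hom_ext'
    · simp [hg0]
    · simp only [biprod.inr_desc_assoc, Category.assoc]
      rw [w, comp_zero, zero_comp]
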